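/- Let A be an S-ring over a finite abelian group G, p a prime dividing |G|, and H = {g ∈ G : g^p = e}. Then for every A-set X, the set X^{[p]} = {x^p : x ∈ X and |X ∩ Hx| ≢ 0 (mod p)} is an A-set. -/

import Mathlib

/-!
The group ring of an abelian group over `𝔽_p` is commutative of characteristic `p`, so
`X̄ ^ p ≡ Σ_{x ∈ X} x ^ p (mod p)`: the coefficient of `g` in `X̄ ^ p` is congruent mod `p` to the
number of `x ∈ X` with `x ^ p = g`, which for `g = x ^ p` is `|X ∩ Hx|`. As `X̄ ^ p ∈ A` and the
elements of `A` have constant coefficients on each basic set, the elements whose coefficient in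
`X̄ ^ p` is nonzero mod `p` form a union of basic sets, and this set is `X^{[p]}`.
-/

open scoped BigOperators Pointwise Classical

noncomputable section

/-- The group-ring element `X̄ = Σ_{x∈X} x` in `ℤG`. -/
def ind {G : Type*} [Group G] (X : Finset G) : MonoidAlgebra ℤ G :=
  ∑ x ∈ X, MonoidAlgebra.single x 1

/-- The ℤ-span of the class sums of the members of `S`. -/
def spanA {G : Type*} [Group G] (S : Finset (Finset G)) :
    Submodule ℤ (MonoidAlgebra ℤ G) :=
  Submodule.span ℤ (ind '' (S : Set (Finset G)))

/-- `S` is the partition of basic sets of an S-ring over `G`. -/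
structure IsSRing {G : Type*} [Group G] (S : Finset (Finset G)) : Prop where
  cover : ∀ g : G, ∃ X ∈ S, g ∈ X
  disj : ∀ X ∈ S, ∀ Y ∈ S, X ≠ Y → Disjoint X Y
  nonempty : ∀ X ∈ S, X.Nonempty
  one_mem : ({1} : Finset G) ∈ S
  inv_mem : ∀ X ∈ S, X.image (·⁻¹) ∈ S
  mul_closed : ∀ a ∈ spanA S, ∀ b ∈ spanA S, a * b ∈ spanA S

/-- `X` is an `A`-set: its class sum lies in the span of the basic class sums. -/
def IsASet {G : Type*} [Group G] (S : Finset (Finset G)) (X : Finset G) : Prop :=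
  ind X ∈ spanA S

/-- The finset underlying a subgroup of a finite group. -/
def subgroupFinset {G : Type*} [Group G] [Fintype G] (H : Subgroup G) : Finset G :=
  Finset.univ.filter (· ∈ H)

/-- `H` is an `A`-subgroup. -/
def IsASubgroup {G : Type*} [Group G] [Fintype G] (S : Finset (Finset G))
    (H : Subgroup G) : Prop :=
  IsASet S (subgroupFinset H)

/-- The radical `rad(X) = {g : gX = Xg = X}` as a subgroup. -/
def radSubgroup {G : Type*} [Group G] (X : Finset G) : Subgroup G where
  carrier := {g : G | X.image (g * ·) = X ∧ X.image (· * g) = X}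
  one_mem' := by
    constructor <;> · simp only [one_mul, mul_one]; exact Finset.image_id
  mul_mem' := by
    rintro a b ⟨ha1, ha2⟩ ⟨hb1, hb2⟩
    constructor
    · have : X.image (a * b * ·) = (X.image (b * ·)).image (a * ·) := by
        rw [Finset.image_image]
        exact Finset.image_congr (fun x _ => by simp [mul_assoc])
      rw [this, hb1, ha1]
    · have : X.image (· * (a * b)) = (X.image (· * a)).image (· * b) := by
        rw [Finset.image_image]
        exact Finset.image_congr (fun x _ => by simp [mul_assoc])
      rw [this, ha2, hb2]
  inv_mem' := by
    rintro a ⟨ha1, ha2⟩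
    constructor
    · have := congrArg (Finset.image (a⁻¹ * ·)) ha1
      rw [Finset.image_image] at this
      have h2 : X.image ((a⁻¹ * ·) ∘ (a * ·)) = X := by
        rw [show ((a⁻¹ * ·) ∘ (a * ·)) = id by funext x; simp, Finset.image_id]
      rw [← this, h2]
    · have := congrArg (Finset.image (· * a⁻¹)) ha2
      rw [Finset.image_image] at this
      have h2 : X.image ((· * a⁻¹) ∘ (· * a)) = X := by
        rw [show ((· * a⁻¹) ∘ (· * a)) = id by funext x; simp, Finset.image_id]
      rw [← this, h2]

end

open Finset

lemma coeff_sum_single_one {α G R : Type*} [Semiring R] (X : Finset α) (f : α → G) (g : G) :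
    (∑ x ∈ X, MonoidAlgebra.single (f x) (1 : R)).coeff g = #(X.filter (f · = g)) := by
  simp [MonoidAlgebra.coeff_sum, Finsupp.single_apply]

lemma coeff_ind {G : Type*} [Group G] (X : Finset G) (g : G) :
    (ind X).coeff g = if g ∈ X then 1 else 0 := by
  simp [ind, MonoidAlgebra.coeff_sum, Finsupp.single_apply]

namespace IsSRing

variable {G : Type*} [Group G] {S : Finset (Finset G)}

lemma coeff_eq_of_mem (hS : IsSRing S) {a : MonoidAlgebra ℤ G} (ha : a ∈ spanA S)
    {T : Finset G} (hT : T ∈ S) {x y : G} (hx : x ∈ T) (hy : y ∈ T) :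
    a.coeff x = a.coeff y := by
  induction ha using Submodule.span_induction with
  | mem b hb =>
    obtain ⟨T', hT', rfl⟩ := hb
    rw [coeff_ind, coeff_ind]
    rcases eq_or_ne T T' with rfl | hne
    · simp [hx, hy]
    · have hd := hS.disj T hT T' hT' hne
      rw [if_neg (disjoint_left.mp hd hx), if_neg (disjoint_left.mp hd hy)]
  | zero => rfl
  | add b c _ _ hb hc => simp only [MonoidAlgebra.coeff_add, Finsupp.add_apply, hb, hc]
  | smul r b _ hb => simp only [MonoidAlgebra.coeff_smul, Finsupp.smul_apply, hb]

lemma isASet_filter_coeff [Fintype G] (hS : IsSRing S) {a : MonoidAlgebra ℤ G}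
    (ha : a ∈ spanA S) (P : ℤ → Prop) [DecidablePred P] :
    IsASet S (univ.filter fun g => P (a.coeff g)) := by
  set S' := S.filter fun T => ∃ g ∈ T, P (a.coeff g)
  suffices hsum : ind (univ.filter fun g => P (a.coeff g)) = ∑ T ∈ S', ind T by
    rw [IsASet, hsum]
    exact Submodule.sum_mem _ fun T hT => Submodule.subset_span ⟨T, (mem_filter.mp hT).1, rfl⟩
  ext g
  obtain ⟨T₀, hT₀, hgT₀⟩ := hS.cover g
  have h_unique : ∀ T ∈ S, g ∈ T → T = T₀ := fun T hT hgT => by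
    by_contra hne
    exact disjoint_left.mp (hS.disj T hT T₀ hT₀ hne) hgT hgT₀
  simp only [MonoidAlgebra.coeff_sum, Finset.sum_apply', coeff_ind, mem_filter, mem_univ,
    true_and]
  by_cases hg : P (a.coeff g)
  · rw [if_pos hg, sum_eq_single_of_mem T₀ (mem_filter.mpr ⟨hT₀, g, hgT₀, hg⟩), if_pos hgT₀]
    exact fun T hT hne => if_neg fun hgT => hne (h_unique T (mem_filter.mp hT).1 hgT)
  · rw [if_neg hg]
    refine (sum_eq_zero fun T hT => if_neg fun hgT => ?_).symm
    obtain ⟨hTS, x, hxT, hx⟩ := mem_filter.mp hT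
    exact hg (hS.coeff_eq_of_mem ha hTS hgT hxT ▸ hx)

lemma one_mem_spanA (hS : IsSRing S) : (1 : MonoidAlgebra ℤ G) ∈ spanA S := by
  have h1 : (1 : MonoidAlgebra ℤ G) = ind {1} := by simp [ind, MonoidAlgebra.one_def]
  exact h1 ▸ Submodule.subset_span ⟨{1}, hS.one_mem, rfl⟩

lemma pow_mem_spanA (hS : IsSRing S) {a : MonoidAlgebra ℤ G} (ha : a ∈ spanA S) (n : ℕ) :
    a ^ n ∈ spanA S := by
  induction n with
  | zero => simpa using hS.one_mem_spanA
  | succ n ih => simpa [pow_succ] using hS.mul_closed _ ih _ ha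

end IsSRing

instance MonoidAlgebra.charP {R G : Type*} [Semiring R] [Monoid G] (p : ℕ) [CharP R p] :
    CharP (MonoidAlgebra R G) p :=
  charP_of_injective_ringHom (f := MonoidAlgebra.singleOneRingHom)
    (fun x y h => by simpa using h) p

lemma coeff_ind_pow_char {G : Type*} [CommGroup G] (p : ℕ) [Fact p.Prime] (X : Finset G)
    (g : G) : (((ind X ^ p).coeff g : ℤ) : ZMod p) = #(X.filter (· ^ p = g)) := by
  let φ := MonoidAlgebra.mapRingHom G (Int.castRingHom (ZMod p))
  have hfrob : φ (ind X ^ p) = ∑ x ∈ X, MonoidAlgebra.single (x ^ p) 1 := by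
    simp [φ, ind, sum_pow_char, MonoidAlgebra.single_pow]
  calc (((ind X ^ p).coeff g : ℤ) : ZMod p) = (φ (ind X ^ p)).coeff g :=
        (MonoidAlgebra.coeff_mapRingHom (Int.castRingHom (ZMod p)) (ind X ^ p) g).symm
    _ = _ := by rw [hfrob, coeff_sum_single_one]

lemma inter_image_mul_eq_filter_pow_eq {G : Type*} [CommGroup G] [Fintype G] (X : Finset G)
    (n : ℕ) (x : G) :
    X ∩ (univ.filter fun h : G => h ^ n = 1).image (· * x) = X.filter (· ^ n = x ^ n) := by
  ext y
  simp only [mem_inter, mem_filter, mem_image, mem_univ, true_and]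
  refine and_congr_right fun _ => ⟨?_, fun hy => ⟨y * x⁻¹, ?_, inv_mul_cancel_right y x⟩⟩
  · rintro ⟨h, hh, rfl⟩
    rw [mul_pow, hh, one_mul]
  · rw [mul_pow, hy, inv_pow, mul_inv_cancel]

lemma image_filter_card_fiber {α β : Type*} [Fintype β] [DecidableEq β] (s : Finset α)
    (f : α → β) {Q : ℕ → Prop} [DecidablePred Q] (hQ : ¬ Q 0) :
    (s.filter fun x => Q #(s.filter (f · = f x))).image f =
      univ.filter fun y => Q #(s.filter (f · = y)) := by
  ext y
  simp only [mem_image, mem_filter, mem_univ, true_and]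
  constructor
  · rintro ⟨x, ⟨_, hx⟩, rfl⟩
    exact hx
  · intro hy
    obtain ⟨x, hx⟩ : (s.filter (f · = y)).Nonempty :=
      nonempty_iff_ne_empty.mpr fun h => hQ (by rwa [h, card_empty] at hy)
    obtain ⟨hxs, rfl⟩ := mem_filter.mp hx
    exact ⟨x, ⟨hxs, hy⟩, rfl⟩

theorem stmt6_general {G : Type*} [CommGroup G] [Fintype G] (S : Finset (Finset G))
    (hS : IsSRing S) (p : ℕ) (hp : p.Prime)
    (X : Finset G) (hX : IsASet S X) :
    IsASet S
      ((X.filter (fun x =>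
        ¬ p ∣ (X ∩ (Finset.univ.filter (fun h : G => h ^ p = 1)).image (· * x)).card)).image
        (· ^ p)) := by
  have := Fact.mk hp
  have hfiber (g : G) :
      ¬ p ∣ #(X.filter (· ^ p = g)) ↔ ((ind X ^ p).coeff g : ZMod p) ≠ 0 := by
    rw [coeff_ind_pow_char, Ne, ZMod.natCast_eq_zero_iff]
  simp_rw [inter_image_mul_eq_filter_pow_eq,
    image_filter_card_fiber X (· ^ p) (Q := (¬ p ∣ ·)) (not_not_intro (dvd_zero p)), hfiber]
  exact hS.isASet_filter_coeff (hS.pow_mem_spanA hX p) fun n => (n : ZMod p) ≠ 0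

/-- Schur's second multiplier theorem: with
`H = {g : g^p = 1}`, for every `A`-set `X` the set
`X^{[p]} = {x^p : x ∈ X, |X ∩ Hx| ≢ 0 (mod p)}` is an `A`-set. -/
theorem stmt6 {G : Type*} [CommGroup G] [Fintype G] (S : Finset (Finset G))
    (hS : IsSRing S) (p : ℕ) (hp : p.Prime) (hdvd : p ∣ Fintype.card G)
    (X : Finset G) (hX : IsASet S X) :
    IsASet S
      ((X.filter (fun x =>
        ¬ p ∣ (X ∩ (Finset.univ.filter (fun h : G => h ^ p = 1)).image (· * x)).card)).image
        (· ^ p)) :=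
  stmt6_general S hS p hp X hX
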